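/- P(L(n) < ℓ) = 1 + ∑_{r≥1} (-1)^r [C(n-ℓr, r) p^{ℓr} q^r + C(n-ℓr, r-1) p^{ℓr} q^{r-1}], where L(n) is the longest run of 1's in n i.i.d. Bernoulli(p) tosses, q = 1-p, and binomial coefficients C(a,b) vanish when b > a or a < 0. -/
import Mathlib


open scoped Classical
open Finset Filter

noncomputable section

/-- Weight (probability) of a Boolean string of length `n` under i.i.d. Bernoulli(p). -/
def wt (p : ℝ) {n : ℕ} (x : Fin n → Bool) : ℝ :=
  ∏ i, (if x i then p else 1 - p)

/-- Extend a finite string by `false`. -/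
def pad {n : ℕ} (x : Fin n → Bool) : ℕ → Bool :=
  fun i => if h : i < n then x ⟨i, h⟩ else false

/-- A maximal run of 1's of length exactly `ℓ` starts at position `i` (0-indexed)
within the first `n` positions. -/
def IsRunAt (x : ℕ → Bool) (n i ℓ : ℕ) : Prop :=
  1 ≤ ℓ ∧ i + ℓ ≤ n ∧ (∀ k < ℓ, x (i + k) = true) ∧
    (i = 0 ∨ x (i - 1) = false) ∧ (i + ℓ = n ∨ x (i + ℓ) = false)

/-- `R_ℓ(n)`: the number of maximal runs of 1's of length exactly `ℓ` in the first `n` tosses. -/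
def runCount (x : ℕ → Bool) (n ℓ : ℕ) : ℕ :=
  ((Finset.range n).filter (fun i => IsRunAt x n i ℓ)).card

/-- `G_ℓ(n)`: the number of maximal runs of 1's of length at least `ℓ` in the first `n` tosses. -/
def excCount (x : ℕ → Bool) (n ℓ : ℕ) : ℕ :=
  ∑ k ∈ Finset.Icc ℓ n, runCount x n k

/-- `L(n)`: the length of the longest run of 1's in the first `n` tosses. -/
def longestRun (x : ℕ → Bool) (n : ℕ) : ℕ :=
  (Finset.range (n + 1)).sup
    (fun ℓ => if ∃ i, i + ℓ ≤ n ∧ ∀ k < ℓ, x (i + k) = true then ℓ else 0)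

/-- Expectation of a (real) functional of `n` i.i.d. Bernoulli(p) tosses. -/
def Ex (p : ℝ) (n : ℕ) (f : (ℕ → Bool) → ℝ) : ℝ :=
  ∑ x : Fin n → Bool, wt p x * f (pad x)

/-- Expectation of a complex functional of `n` i.i.d. Bernoulli(p) tosses. -/
def ExC (p : ℝ) (n : ℕ) (f : (ℕ → Bool) → ℂ) : ℂ :=
  ∑ x : Fin n → Bool, (wt p x : ℂ) * f (pad x)

/-- Probability of an event depending on the first `n` i.i.d. Bernoulli(p) tosses. -/
def Pr (p : ℝ) (n : ℕ) (A : Set (ℕ → Bool)) : ℝ :=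
  ∑ x : Fin n → Bool, if pad x ∈ A then wt p x else 0

/-- Binomial coefficient with integer upper argument, vanishing for negative upper argument. -/
def C (a : ℤ) (b : ℕ) : ℝ :=
  if a < 0 then 0 else (a.toNat).choose b

lemma C_neg {a : ℤ} (h : a < 0) (b : ℕ) : C a b = 0 := if_pos h

lemma C_ofNat (k : ℕ) (b : ℕ) : C (k : ℤ) b = k.choose b := by
  simp [C]

lemma C_pascal (a : ℤ) (b : ℕ) : C a (b + 1) = C (a - 1) (b + 1) + C (a - 1) b := by
  rcases lt_trichotomy a 0 with h | h | h
  · rw [C_neg h, C_neg (a := a - 1) (by omega), C_neg (a := a - 1) (by omega)]; ring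
  · subst h
    rw [C_neg (a := (0:ℤ) - 1) (by omega), C_neg (a := (0:ℤ) - 1) (by omega)]
    simp [C]
  · have h1 : a.toNat = (a - 1).toNat + 1 := by omega
    have h2 : ¬ (a - 1 < 0) := by omega
    rw [C, C, C, if_neg (by omega), if_neg h2, if_neg h2, h1,
      Nat.choose_succ_succ']
    push_cast; ring

def T (p : ℝ) (ℓ n r : ℕ) : ℝ :=
  (-1 : ℝ) ^ (r + 1) *
    (C ((n : ℤ) - ℓ * (r + 1)) (r + 1) * p ^ (ℓ * (r + 1)) * (1 - p) ^ (r + 1) +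
      C ((n : ℤ) - ℓ * (r + 1)) r * p ^ (ℓ * (r + 1)) * (1 - p) ^ r)

def g (p : ℝ) (ℓ n : ℕ) : ℝ := 1 + ∑ r ∈ Finset.range n, T p ℓ n r

lemma T_zero {ℓ : ℕ} (hℓ : 1 ≤ ℓ) {n r : ℕ} (h : n ≤ r) (p : ℝ) : T p ℓ n r = 0 := by
  have ha : (n : ℤ) - ℓ * (r + 1) < 0 := by
    have h1 : (1 : ℤ) ≤ ℓ := by exact_mod_cast hℓ
    have h2 : (n : ℤ) ≤ r := by exact_mod_cast h
    nlinarith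
  rw [T, C_neg ha, C_neg ha]; ring

lemma g_eq_sum {ℓ : ℕ} (hℓ : 1 ≤ ℓ) (p : ℝ) {n N : ℕ} (h : n ≤ N) :
    g p ℓ n = 1 + ∑ r ∈ Finset.range N, T p ℓ n r := by
  rw [g]
  congr 1
  exact Finset.sum_subset (Finset.range_subset_range.2 h)
    (fun r _ hr => T_zero hℓ (by simpa using hr) p)

lemma g_lt {ℓ n : ℕ} (hn : n < ℓ) (p : ℝ) : g p ℓ n = 1 := by
  rw [g]
  have hz : ∀ r ∈ Finset.range n, T p ℓ n r = 0 := by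
    intro r _
    have ha : (n : ℤ) - ℓ * (r + 1) < 0 := by
      have h1 : (n : ℤ) < ℓ := by exact_mod_cast hn
      nlinarith [Int.ofNat_nonneg r]
    rw [T, C_neg ha, C_neg ha]; ring
  rw [Finset.sum_eq_zero hz]; ring

lemma g_ell {ℓ : ℕ} (hℓ : 1 ≤ ℓ) (p : ℝ) : g p ℓ ℓ = 1 - p ^ ℓ := by
  rw [g]
  rw [show ℓ = (ℓ - 1) + 1 by omega, Finset.sum_range_succ']
  rw [show (ℓ - 1) + 1 = ℓ by omega]
  have h0 : T p ℓ ℓ 0 = -p ^ ℓ := by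
    rw [T]
    push_cast
    rw [show ((ℓ : ℤ) - ℓ * 1) = ((0 : ℕ) : ℤ) from by push_cast; ring,
      C_ofNat, C_ofNat]
    simp
  have hrest : ∀ i ∈ Finset.range (ℓ - 1), T p ℓ ℓ (i + 1) = 0 := by
    intro i _
    rw [T]
    push_cast
    have h1 : (1 : ℤ) ≤ ℓ := by exact_mod_cast hℓ
    have ha : (ℓ : ℤ) - ℓ * ((i : ℤ) + 1 + 1) < 0 := by
      nlinarith [Int.ofNat_nonneg i]
    rw [C_neg ha, C_neg ha]; ring
  rw [Finset.sum_eq_zero hrest, h0]; ring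

lemma T_step (p : ℝ) (ℓ m s : ℕ) :
    T p ℓ (m + ℓ + 1) (s + 1) - T p ℓ (m + ℓ) (s + 1) = -((1 - p) * p ^ ℓ * T p ℓ m s) := by
  simp only [T]
  push_cast
  rw [show ((m:ℤ) + ↑ℓ - ↑ℓ * (↑s + 1 + 1)) = ((m:ℤ) + ↑ℓ + 1 - ↑ℓ * (↑s + 1 + 1)) - 1 from by
      ring,
    show ((m:ℤ) - ↑ℓ * (↑s + 1)) = ((m:ℤ) + ↑ℓ + 1 - ↑ℓ * (↑s + 1 + 1)) - 1 from by ring,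
    C_pascal ((m:ℤ) + ↑ℓ + 1 - ↑ℓ * (↑s + 1 + 1)) (s + 1),
    C_pascal ((m:ℤ) + ↑ℓ + 1 - ↑ℓ * (↑s + 1 + 1)) s,
    show ℓ * (s + 1 + 1) = ℓ + ℓ * (s + 1) from by ring, pow_add]
  ring

lemma T_step0 (p : ℝ) (ℓ m : ℕ) :
    T p ℓ (m + ℓ + 1) 0 - T p ℓ (m + ℓ) 0 = -((1 - p) * p ^ ℓ) := by
  simp only [T]
  push_cast
  rw [show ((m:ℤ) + ↑ℓ + 1 - ↑ℓ * 1) = ((m + 1 : ℕ) : ℤ) from by push_cast; ring,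
    show ((m:ℤ) + ↑ℓ - ↑ℓ * 1) = ((m : ℕ) : ℤ) from by push_cast; ring,
    C_ofNat, C_ofNat, C_ofNat, C_ofNat]
  simp [Nat.choose_one_right]
  push_cast
  ring

lemma g_rec {ℓ : ℕ} (hℓ : 1 ≤ ℓ) (p : ℝ) (m : ℕ) :
    g p ℓ (m + ℓ + 1) = g p ℓ (m + ℓ) - (1 - p) * p ^ ℓ * g p ℓ m := by
  have h1 : g p ℓ (m + ℓ) = 1 + ∑ r ∈ Finset.range (m + ℓ + 1), T p ℓ (m + ℓ) r :=
    g_eq_sum hℓ p (by omega)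
  have h2 : g p ℓ m = 1 + ∑ r ∈ Finset.range (m + ℓ), T p ℓ m r :=
    g_eq_sum hℓ p (by omega)
  rw [g, h1, h2]
  rw [Finset.sum_range_succ' (fun r => T p ℓ (m + ℓ + 1) r) (m + ℓ),
    Finset.sum_range_succ' (fun r => T p ℓ (m + ℓ) r) (m + ℓ)]
  have step : ∀ s ∈ Finset.range (m + ℓ),
      T p ℓ (m + ℓ + 1) (s + 1) = T p ℓ (m + ℓ) (s + 1) - (1 - p) * p ^ ℓ * T p ℓ m s := by
    intro s _
    have h := T_step p ℓ m s
    linarith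
  rw [Finset.sum_congr rfl step, Finset.sum_sub_distrib]
  have h0 := T_step0 p ℓ m
  rw [← Finset.mul_sum]
  linarith

/-- "no run of length ℓ within the first n tosses" -/
def NR (ℓ : ℕ) (x : ℕ → Bool) (n : ℕ) : Prop :=
  ¬ ∃ i, i + ℓ ≤ n ∧ ∀ k < ℓ, x (i + k) = true

lemma NR_mono {ℓ : ℕ} {x : ℕ → Bool} {n n' : ℕ} (h : n ≤ n') (h' : NR ℓ x n') :
    NR ℓ x n := by
  rintro ⟨i, hi, hr⟩
  exact h' ⟨i, by omega, hr⟩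

lemma longestRun_lt_iff {ℓ : ℕ} (hℓ : 1 ≤ ℓ) (x : ℕ → Bool) (n : ℕ) :
    longestRun x n < ℓ ↔ NR ℓ x n := by
  rw [NR, ← not_le]
  constructor
  · intro h ⟨i, hi, hr⟩
    exact h (Finset.le_sup (f := fun j => if ∃ i, i + j ≤ n ∧ ∀ k < j, x (i + k) = true
      then j else 0) (b := ℓ) (Finset.mem_range.2 (by omega)) |>.trans_eq'
      (by rw [if_pos ⟨i, hi, hr⟩]))
  · intro h hle
    rw [longestRun, Finset.le_sup_iff (by omega : (0:ℕ) < ℓ)] at hle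
    obtain ⟨b, _, hb⟩ := hle
    by_cases hc : ∃ i, i + b ≤ n ∧ ∀ k < b, x (i + k) = true
    · obtain ⟨i, hi, hr⟩ := hc
      rw [if_pos ⟨i, hi, hr⟩] at hb
      exact h ⟨i, by omega, fun k hk => hr k (by omega)⟩
    · rw [if_neg hc] at hb; omega

lemma sum_snoc {n : ℕ} (G : (Fin (n + 1) → Bool) → ℝ) :
    ∑ y : Fin (n + 1) → Bool, G y = ∑ x : Fin n → Bool, ∑ b : Bool, G (Fin.snoc x b) := by
  rw [← Equiv.sum_comp (Fin.snocEquiv (fun _ => Bool)) G, Fintype.sum_prod_type]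
  rw [Finset.sum_comm]
  rfl

lemma wt_snoc (p : ℝ) {n : ℕ} (x : Fin n → Bool) (b : Bool) :
    wt p (Fin.snoc x b) = wt p x * (if b then p else 1 - p) := by
  rw [wt, Fin.prod_univ_castSucc]
  simp [wt]

lemma pad_snoc_lt {n : ℕ} (x : Fin n → Bool) (b : Bool) {i : ℕ} (h : i < n) :
    pad (Fin.snoc x b) i = pad x i := by
  rw [pad, pad, dif_pos h, dif_pos (by omega : i < n + 1)]
  have : (⟨i, by omega⟩ : Fin (n + 1)) = Fin.castSucc ⟨i, h⟩ := rfl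
  rw [this, Fin.snoc_castSucc]

lemma pad_snoc_last {n : ℕ} (x : Fin n → Bool) (b : Bool) :
    pad (Fin.snoc x b) n = b := by
  rw [pad, dif_pos (by omega : n < n + 1)]
  have : (⟨n, by omega⟩ : Fin (n + 1)) = Fin.last n := rfl
  rw [this, Fin.snoc_last]

lemma marg (p : ℝ) {n : ℕ} (F : (ℕ → Bool) → ℝ)
    (hF : ∀ y y' : ℕ → Bool, (∀ i < n, y i = y' i) → F y = F y') :
    ∑ y : Fin (n + 1) → Bool, wt p y * F (pad y) =
      ∑ x : Fin n → Bool, wt p x * F (pad x) := by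
  rw [sum_snoc]
  refine Finset.sum_congr rfl fun x _ => ?_
  have hFx : ∀ b, F (pad (Fin.snoc x b)) = F (pad x) :=
    fun b => hF _ _ (fun i hi => pad_snoc_lt x b hi)
  rw [Fintype.sum_bool, wt_snoc, wt_snoc, hFx, hFx]
  simp
  ring

lemma peel (p : ℝ) {n : ℕ} (F : (ℕ → Bool) → ℝ)
    (hF : ∀ y y' : ℕ → Bool, (∀ i < n, y i = y' i) → F y = F y') (b : Bool) :
    ∑ y : Fin (n + 1) → Bool, wt p y * ((if pad y n = b then 1 else 0) * F (pad y)) =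
      (if b then p else 1 - p) * ∑ x : Fin n → Bool, wt p x * F (pad x) := by
  rw [sum_snoc, Finset.mul_sum]
  refine Finset.sum_congr rfl fun x _ => ?_
  have hFx : ∀ c, F (pad (Fin.snoc x c)) = F (pad x) :=
    fun c => hF _ _ (fun i hi => pad_snoc_lt x c hi)
  rw [Fintype.sum_bool, wt_snoc, wt_snoc, hFx, hFx, pad_snoc_last, pad_snoc_last]
  cases b <;> simp <;> ring

lemma ind_and (A B : Prop) : (if A ∧ B then (1:ℝ) else 0) = (if A then 1 else 0) * (if B then 1 else 0) := by
  by_cases hA : A <;> by_cases hB : B <;> simp [hA, hB]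

lemma pat (p : ℝ) {n : ℕ} (F : (ℕ → Bool) → ℝ)
    (hF : ∀ y y' : ℕ → Bool, (∀ i < n, y i = y' i) → F y = F y') :
    ∀ j : ℕ, ∑ y : Fin (n + j) → Bool,
        wt p y * ((if ∀ k < j, pad y (n + k) = true then 1 else 0) * F (pad y)) =
      p ^ j * ∑ x : Fin n → Bool, wt p x * F (pad x) := by
  intro j
  induction j with
  | zero =>
      simp only [Nat.add_zero, pow_zero, one_mul]
      refine Finset.sum_congr rfl fun x _ => ?_
      rw [if_pos (by omega)]
      ring
  | succ j ih =>
      have split : ∀ y : ℕ → Bool,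
          (if ∀ k < j + 1, y (n + k) = true then (1:ℝ) else 0) =
          (if y (n + j) = true then 1 else 0) *
            (if ∀ k < j, y (n + k) = true then 1 else 0) := by
        intro y
        have hiff : (∀ k < j + 1, y (n + k) = true) ↔
            (y (n + j) = true ∧ ∀ k < j, y (n + k) = true) := by
          constructor
          · intro h; exact ⟨h j (by omega), fun k hk => h k (by omega)⟩
          · rintro ⟨h1, h2⟩ k hk
            rcases Nat.lt_succ_iff_lt_or_eq.1 hk with h | h
            · exact h2 k h
            · subst h; exact h1
        simp only [hiff]
        by_cases hA : y (n + j) = true <;> by_cases hB : ∀ k < j, y (n + k) = true <;>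
          simp [hA, hB]
      have hF' : ∀ y y' : ℕ → Bool, (∀ i < n + j, y i = y' i) →
          ((if ∀ k < j, y (n + k) = true then (1:ℝ) else 0) * F y) =
          ((if ∀ k < j, y' (n + k) = true then (1:ℝ) else 0) * F y') := by
        intro y y' h
        rw [hF y y' (fun i hi => h i (by omega))]
        congr 2
        simp only [eq_iff_iff]
        exact ⟨fun hh k hk => (h (n+k) (by omega)).symm ▸ hh k hk,
               fun hh k hk => (h (n+k) (by omega)) ▸ hh k hk⟩
      calc ∑ y : Fin (n + (j + 1)) → Bool,
              wt p y * ((if ∀ k < j + 1, pad y (n + k) = true then 1 else 0) * F (pad y))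
          = ∑ y : Fin ((n + j) + 1) → Bool, wt p y * ((if pad y (n + j) = true then 1 else 0) *
              ((if ∀ k < j, pad y (n + k) = true then 1 else 0) * F (pad y))) := by
            refine Finset.sum_congr rfl fun y _ => ?_
            rw [split]
            ring
        _ = p * (∑ x : Fin (n + j) → Bool,
              wt p x * ((if ∀ k < j, pad x (n + k) = true then 1 else 0) * F (pad x))) := by
            rw [peel p _ hF' true, if_pos rfl]
        _ = p ^ (j + 1) * ∑ x : Fin n → Bool, wt p x * F (pad x) := by
            rw [ih, pow_succ]
            ring

/-- the no-run probability -/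
def f (p : ℝ) (ℓ n : ℕ) : ℝ :=
  ∑ x : Fin n → Bool, if NR ℓ (pad x) n then wt p x else 0

lemma sum_wt (p : ℝ) : ∀ n : ℕ, ∑ x : Fin n → Bool, wt p x = 1 := by
  intro n
  induction n with
  | zero => simp [wt]
  | succ n ih =>
      have := marg p (n := n) (fun _ => 1) (fun _ _ _ => rfl)
      simpa [ih] using this

lemma f_lt {ℓ n : ℕ} (hn : n < ℓ) (p : ℝ) : f p ℓ n = 1 := by
  rw [f, ← sum_wt p n]
  refine Finset.sum_congr rfl fun x _ => ?_
  rw [if_pos]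
  rintro ⟨i, hi, _⟩
  omega

lemma ind_congr {P Q : Prop} (h : P ↔ Q) : (if P then (1:ℝ) else 0) = if Q then 1 else 0 := by
  by_cases hP : P
  · rw [if_pos hP, if_pos (h.1 hP)]
  · rw [if_neg hP, if_neg (fun hQ => hP (h.2 hQ))]

lemma ind_sub {P Q : Prop} (h : Q → P) :
    (if P then (1:ℝ) else 0) - (if Q then 1 else 0) = if P ∧ ¬Q then 1 else 0 := by
  by_cases hQ : Q
  · rw [if_pos (h hQ), if_pos hQ, if_neg (fun hh => hh.2 hQ)]; ring
  · by_cases hP : P <;> simp [hP, hQ]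

lemma NR_depends {ℓ n : ℕ} {y y' : ℕ → Bool} (hℓ : 1 ≤ ℓ)
    (h : ∀ i < n, y i = y' i) : NR ℓ y n ↔ NR ℓ y' n := by
  have aux : ∀ (z z' : ℕ → Bool), (∀ i < n, z i = z' i) → NR ℓ z n → NR ℓ z' n := by
    intro z z' hz hNR ⟨i, hi, hr⟩
    exact hNR ⟨i, hi, fun k hk => (hz (i + k) (by omega)).symm ▸ hr k hk⟩
  exact ⟨aux y y' h, aux y' y (fun i hi => (h i hi).symm)⟩

lemma main_iff {ℓ : ℕ} (hℓ : 1 ≤ ℓ) (m : ℕ) (y : ℕ → Bool) :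
    (NR ℓ y (m + ℓ) ∧ ¬ NR ℓ y (m + ℓ + 1)) ↔
      ((∀ k < ℓ, y (m + 1 + k) = true) ∧ (y m = false ∧ NR ℓ y m)) := by
  constructor
  · rintro ⟨h1, h2⟩
    rw [NR, not_not] at h2
    obtain ⟨i, hi, hr⟩ := h2
    have hieq : i = m + 1 := by
      by_contra hne
      exact h1 ⟨i, by omega, hr⟩
    subst hieq
    refine ⟨hr, ?_, NR_mono (by omega) h1⟩
    · cases hym : y m with
      | false => rfl
      | true =>
          exfalso
          apply h1
          refine ⟨m, by omega, fun k hk => ?_⟩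
          cases k with
          | zero => simpa using hym
          | succ k' =>
              have : m + (k' + 1) = m + 1 + k' := by omega
              rw [this]
              exact hr k' (by omega)
  · rintro ⟨hrun, hm, hnr⟩
    constructor
    · rintro ⟨i, hi, hr⟩
      by_cases hc : i + ℓ ≤ m
      · exact hnr ⟨i, hc, hr⟩
      · have hile : i ≤ m := by omega
        have hmi : m = i + (m - i) := by omega
        have : y m = true := by rw [hmi]; exact hr (m - i) (by omega)
        rw [hm] at this
        exact absurd this (by simp)
    · rw [NR, not_not]
      exact ⟨m + 1, by omega, hrun⟩

lemma fdef (p : ℝ) (ℓ n : ℕ) :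
    f p ℓ n = ∑ x : Fin n → Bool, wt p x * (if NR ℓ (pad x) n then 1 else 0) := by
  rw [f]
  exact Finset.sum_congr rfl fun x _ => by rw [mul_ite, mul_one, mul_zero]

lemma f_ell {ℓ : ℕ} (hℓ : 1 ≤ ℓ) (p : ℝ) : f p ℓ ℓ = 1 - p ^ ℓ := by
  have hiff : ∀ y : ℕ → Bool, (¬ NR ℓ y ℓ) ↔ (∀ k < ℓ, y k = true) := by
    intro y
    rw [NR, not_not]
    constructor
    · rintro ⟨i, hi, hr⟩
      have hi0 : i = 0 := by omega
      subst hi0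
      simpa using hr
    · intro h
      exact ⟨0, by omega, fun k hk => by simpa using h k hk⟩
  have hp := pat p (n := 0) (fun _ => (1:ℝ)) (fun _ _ _ => rfl) ℓ
  rw [Nat.zero_add ℓ] at hp
  simp only [Nat.zero_add] at hp
  have hone : ∑ x : Fin 0 → Bool, wt p x * 1 = 1 := by simp [wt]
  rw [hone, mul_one] at hp
  rw [fdef]
  have step : ∀ x : Fin ℓ → Bool,
      wt p x * (if NR ℓ (pad x) ℓ then (1:ℝ) else 0) =
        wt p x - wt p x * ((if ∀ k < ℓ, pad x k = true then (1:ℝ) else 0) * 1) := by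
    intro x
    by_cases h : NR ℓ (pad x) ℓ
    · have hA : ¬ (∀ k < ℓ, pad x k = true) := fun hA => (hiff (pad x)).2 hA h
      rw [if_pos h, if_neg hA]; ring
    · have hA : (∀ k < ℓ, pad x k = true) := (hiff (pad x)).1 h
      rw [if_neg h, if_pos hA]; ring
  rw [Finset.sum_congr rfl (fun x _ => step x), Finset.sum_sub_distrib, sum_wt]
  rw [hp]

lemma f_rec {ℓ : ℕ} (hℓ : 1 ≤ ℓ) (p : ℝ) (m : ℕ) :
    f p ℓ (m + ℓ + 1) = f p ℓ (m + ℓ) - (1 - p) * p ^ ℓ * f p ℓ m := by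
  -- F is the inner indicator depending on first m+1 coordinates
  set F : (ℕ → Bool) → ℝ :=
    fun y => (if y m = false then (1:ℝ) else 0) * (if NR ℓ y m then 1 else 0) with hFdef
  have hF : ∀ y y' : ℕ → Bool, (∀ i < m + 1, y i = y' i) → F y = F y' := by
    intro y y' h
    rw [hFdef]
    simp only
    rw [h m (by omega), ind_congr (NR_depends hℓ (fun i hi => h i (by omega)))]
  -- marginalization: f (m+ℓ) as a sum over strings of length m+ℓ+1
  have hmarg : f p ℓ (m + ℓ) =
      ∑ y : Fin (m + ℓ + 1) → Bool, wt p y * (if NR ℓ (pad y) (m + ℓ) then 1 else 0) := by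
    rw [fdef]
    exact (marg p (n := m + ℓ) (fun y => if NR ℓ y (m + ℓ) then 1 else 0)
      (fun y y' h => ind_congr (NR_depends hℓ h))).symm
  -- pointwise indicator identity
  have key : ∀ y : ℕ → Bool,
      (if NR ℓ y (m + ℓ) then (1:ℝ) else 0) - (if NR ℓ y (m + ℓ + 1) then 1 else 0) =
        (if ∀ k < ℓ, y (m + 1 + k) = true then 1 else 0) * F y := by
    intro y
    have hmono : NR ℓ y (m + ℓ + 1) → NR ℓ y (m + ℓ) := NR_mono (by omega)
    have hiff := main_iff hℓ m y
    rw [hFdef]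
    simp only
    by_cases h2 : NR ℓ y (m + ℓ + 1)
    · have h1 : NR ℓ y (m + ℓ) := hmono h2
      rw [if_pos h1, if_pos h2]
      by_cases hA : ∀ k < ℓ, y (m + 1 + k) = true <;> by_cases hB : y m = false <;>
        by_cases hC : NR ℓ y m
      all_goals first
        | (exact absurd h2 (fun h2' => (hiff.2 ⟨hA, hB, hC⟩).2 h2'))
        | (rw [if_neg hA]; ring)
        | (rw [if_neg hB]; ring)
        | (rw [if_neg hC]; ring)
    · by_cases h1 : NR ℓ y (m + ℓ)
      · obtain ⟨hA, hB, hC⟩ := hiff.1 ⟨h1, h2⟩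
        rw [if_pos h1, if_neg h2, if_pos hA, if_pos hB, if_pos hC]; ring
      · rw [if_neg h1, if_neg h2]
        by_cases hA : ∀ k < ℓ, y (m + 1 + k) = true <;> by_cases hB : y m = false <;>
          by_cases hC : NR ℓ y m
        all_goals first
          | (exact absurd (hiff.2 ⟨hA, hB, hC⟩).1 h1)
          | (rw [if_neg hA]; ring)
          | (rw [if_neg hB]; ring)
          | (rw [if_neg hC]; ring)
  -- the pattern sum
  have hp := pat p (n := m + 1) F hF ℓ
  rw [show m + 1 + ℓ = m + ℓ + 1 from by omega] at hp
  -- peel the false bit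
  have hq := peel p (n := m) (fun y => if NR ℓ y m then (1:ℝ) else 0)
    (fun y y' h => ind_congr (NR_depends hℓ h)) false
  simp only [Bool.false_eq_true, if_false] at hq
  -- assemble
  have hsum : f p ℓ (m + ℓ) - f p ℓ (m + ℓ + 1) =
      ∑ y : Fin (m + ℓ + 1) → Bool, wt p y *
        ((if ∀ k < ℓ, pad y (m + 1 + k) = true then (1:ℝ) else 0) * F (pad y)) := by
    rw [hmarg, fdef, ← Finset.sum_sub_distrib]
    refine Finset.sum_congr rfl fun y _ => ?_
    rw [← key (pad y)]
    ring
  have hval : f p ℓ (m + ℓ) - f p ℓ (m + ℓ + 1) = p ^ ℓ * ((1 - p) * f p ℓ m) := by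
    rw [hsum, hp, hFdef]
    simp only
    rw [hq, fdef]
  linarith

/-- exact alternating-sum formula for `P(L(n) < ℓ)`. -/
theorem stmt12 (p : ℝ) (hp : 0 < p) (hp1 : p < 1) (ℓ : ℕ) (hℓ : 1 ≤ ℓ) (n : ℕ) :
    Pr p n {x | longestRun x n < ℓ} =
      1 + ∑' r : ℕ, (-1 : ℝ) ^ (r + 1) *
        (C ((n : ℤ) - ℓ * (r + 1)) (r + 1) * p ^ (ℓ * (r + 1)) * (1 - p) ^ (r + 1) +
          C ((n : ℤ) - ℓ * (r + 1)) r * p ^ (ℓ * (r + 1)) * (1 - p) ^ r) := by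
  have h1 : Pr p n {x | longestRun x n < ℓ} = f p ℓ n := by
    rw [Pr, f]
    refine Finset.sum_congr rfl fun x _ => ?_
    simp only [Set.mem_setOf_eq]
    by_cases h : longestRun (pad x) n < ℓ
    · rw [if_pos h, if_pos ((longestRun_lt_iff hℓ (pad x) n).1 h)]
    · rw [if_neg h, if_neg (fun hn => h ((longestRun_lt_iff hℓ (pad x) n).2 hn))]
  have h2 : ∀ N : ℕ, f p ℓ N = g p ℓ N := by
    intro N
    induction N using Nat.strong_induction_on with
    | _ N ih =>
      rcases lt_trichotomy N ℓ with h | h | h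
      · rw [f_lt h, g_lt h]
      · subst h
        rw [f_ell hℓ, g_ell hℓ]
      · obtain ⟨m, rfl⟩ : ∃ m, N = m + ℓ + 1 := ⟨N - ℓ - 1, by omega⟩
        rw [f_rec hℓ, g_rec hℓ, ih (m + ℓ) (by omega), ih m (by omega)]
  rw [h1, h2 n, g,
    tsum_eq_sum (s := Finset.range n) (f := fun r : ℕ => (-1 : ℝ) ^ (r + 1) *
      (C ((n : ℤ) - ℓ * (r + 1)) (r + 1) * p ^ (ℓ * (r + 1)) * (1 - p) ^ (r + 1) +
        C ((n : ℤ) - ℓ * (r + 1)) r * p ^ (ℓ * (r + 1)) * (1 - p) ^ r))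
      (fun r hr => T_zero hℓ (by simpa using hr) p)]
  simp only [T]
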